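/- arXiv:2404.12981 — 3 statements merged into one kernel-verified Lean document; each statement's English description precedes it below -/
import Mathlib

section
/- Let E be a stable bundle on C, Ψ₁, Ψ₂ ∈ H^0(C, End₀E ⊗ K^{1/2}), and α ∈ H^1(C, End₀E) a first-order deformation of E along which both Ψ₁ and Ψ₂ extend to first order (i.e. there exist Ȧ ∈ Ω^{0,1}(End₀E) representing α and Ψ̇_i with ∂̄Ψ̇_i + [Ȧ, Ψ_i] = 0). Then the Serre duality pairing of [Ψ₁, Ψ₂] ∈ H^0(C, End₀E ⊗ K) with α vanishes: ∫_C tr(Ȧ [Ψ₁, Ψ₂]) = 0. -/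
/-!
Since `Ψ₂` is holomorphic, skew-adjointness of `∂̄` kills `∫ tr(Ψ₂ ∂̄Ψ̇₁)`. The deformation
equation turns this integral into `-∫ tr(Ψ₂ [Ȧ, Ψ₁])`, which by cyclicity of the trace is the
pairing `∫ tr(Ȧ [Ψ₁, Ψ₂])` up to sign.
-/

section SkewAdjoint

variable {R W Wb : Type*} [CommRing R] [AddCommGroup W] [Module R W] [AddCommGroup Wb]
  [Module R Wb] {dbar : W →ₗ[R] Wb} {J : W →ₗ[R] Wb →ₗ[R] R}

theorem pairing_dbar_eq_zero_of_dbar_eq_zero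
    (skew : ∀ ψ φ : W, J ψ (dbar φ) + J φ (dbar ψ) = 0) {φ : W} (hφ : dbar φ = 0) (ψ : W) :
    J φ (dbar ψ) = 0 := by
  simpa [hφ] using skew φ ψ

theorem pairing_eq_zero_of_add_dbar_eq_zero
    (skew : ∀ ψ φ : W, J ψ (dbar φ) + J φ (dbar ψ) = 0) {φ ψd : W} {η : Wb}
    (hφ : dbar φ = 0) (hψ : dbar ψd + η = 0) :
    J φ η = 0 := by
  rw [eq_neg_of_add_eq_zero_right hψ, map_neg,
    pairing_dbar_eq_zero_of_dbar_eq_zero skew hφ, neg_zero]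

end SkewAdjoint

theorem bracket_annihilates_deformation_general
    (W Wb A : Type)
    [AddCommGroup W] [Module ℂ W] [AddCommGroup Wb] [Module ℂ Wb]
    [AddCommGroup A] [Module ℂ A]
    (dbar : W →ₗ[ℂ] Wb)
    (b : A →ₗ[ℂ] W →ₗ[ℂ] Wb)
    (T : A →ₗ[ℂ] W →ₗ[ℂ] W →ₗ[ℂ] ℂ)
    (J : W →ₗ[ℂ] Wb →ₗ[ℂ] ℂ)
    (stokes : ∀ ψ φ : W, J ψ (dbar φ) + J φ (dbar ψ) = 0)
    (hJb : ∀ (a : A) (ψ φ : W), J ψ (b a φ) = T a φ ψ - T a ψ φ)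
    (Adot : A) (Ψ₁ Ψ₂ Ψd₁ : W)
    (hol₂ : dbar Ψ₂ = 0)
    (hdef₁ : dbar Ψd₁ + b Adot Ψ₁ = 0) :
    T Adot Ψ₁ Ψ₂ - T Adot Ψ₂ Ψ₁ = 0 := by
  rw [← hJb]
  exact pairing_eq_zero_of_add_dbar_eq_zero stokes hol₂ hdef₁

/-- Let `E` be a stable bundle, `Ψ₁, Ψ₂ ∈ H⁰(C, End₀E ⊗ K^{1/2})`,
and `α ∈ H¹(C, End₀E)` a first-order deformation along which both `Ψᵢ` extend to
first order: there are `Ȧ ∈ Ω^{0,1}(End₀E)` representing `α` and `Ψ̇ᵢ` with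
`∂̄Ψ̇ᵢ + [Ȧ, Ψᵢ] = 0`.  Then the Serre-duality pairing of `[Ψ₁,Ψ₂]` with `α`
vanishes: `∫_C tr(Ȧ [Ψ₁, Ψ₂]) = 0`.

Abstraction: `W` = smooth sections of `End₀E ⊗ K^{1/2}`, `Wb` = smooth sections
of `End₀E ⊗ K^{1/2} ⊗ K̄`, `A` = `Ω^{0,1}(End₀E)`; `dbar` the `∂̄`-operator,
`b a ψ = [a, ψ]`, `T a ψ φ = ∫_C tr(a ψ φ)` (so that by cyclicity of trace
`∫_C tr(Ȧ[Ψ₁,Ψ₂]) = T Ȧ Ψ₁ Ψ₂ − T Ȧ Ψ₂ Ψ₁`), and `J ψ η = ∫_C tr(ψ η)`.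
`stokes` is the skew-adjointness `∫ tr(ψ ∂̄φ) + ∫ tr(φ ∂̄ψ) = 0` of `∂̄`
(Stokes' theorem), and `hJb` is the cyclic-trace identity
`∫ tr(ψ [a, φ]) = ∫ tr(a φ ψ) − ∫ tr(a ψ φ)`. -/
theorem bracket_annihilates_deformation
    (W Wb A : Type)
    [AddCommGroup W] [Module ℂ W] [AddCommGroup Wb] [Module ℂ Wb]
    [AddCommGroup A] [Module ℂ A]
    (dbar : W →ₗ[ℂ] Wb)
    (b : A →ₗ[ℂ] W →ₗ[ℂ] Wb)
    (T : A →ₗ[ℂ] W →ₗ[ℂ] W →ₗ[ℂ] ℂ)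
    (J : W →ₗ[ℂ] Wb →ₗ[ℂ] ℂ)
    (stokes : ∀ ψ φ : W, J ψ (dbar φ) + J φ (dbar ψ) = 0)
    (hJb : ∀ (a : A) (ψ φ : W), J ψ (b a φ) = T a φ ψ - T a ψ φ)
    (Adot : A) (Ψ₁ Ψ₂ Ψd₁ Ψd₂ : W)
    (hol₁ : dbar Ψ₁ = 0) (hol₂ : dbar Ψ₂ = 0)
    (hdef₁ : dbar Ψd₁ + b Adot Ψ₁ = 0)
    (hdef₂ : dbar Ψd₂ + b Adot Ψ₂ = 0) :
    T Adot Ψ₁ Ψ₂ - T Adot Ψ₂ Ψ₁ = 0 :=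
  bracket_annihilates_deformation_general W Wb A dbar b T J stokes hJb Adot Ψ₁ Ψ₂ Ψd₁ hol₂ hdef₁
end

section
/- Let Q₁ : Σz_i² = 0 and Q₂ : Σμ_i z_i² = 0 be two quadrics in P^{n-1} with μ_i distinct, and M = Q₁ ∩ Q₂ smooth. Then for each i the expression s_i = Σ_{j≠i} (z_i∂_j − z_j∂_i)²/(μ_i − μ_j) is a well-defined holomorphic symmetric 2-tensor (section of S²TM) on M, and restricted to the hyperplane section z_1 = 0, the tensor s_1 = Σ_{j≠1} z_j²∂_1²/(μ_1 − μ_j) has rank 1. -/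
/-!
Write `w j = zᵢ eⱼ - zⱼ eᵢ` and `sᵢ = Σ_{j ≠ i} (μᵢ - μⱼ)⁻¹ w j ⊗ w j`, a sum of symmetric rank-one
tensors. Since `⟪w j, μ z⟫ = -(μᵢ - μⱼ) zᵢ zⱼ`, the denominators cancel against the conormal `μ z`
of `Q₂`, and `sᵢ (μ z) = -zᵢ Σ_j zⱼ w j = -zᵢ (zᵢ z - (Σ_j zⱼ²) eᵢ)`, which is `-zᵢ² z` on `Q₁`.
Hence `sᵢ` maps the conormal direction to the Euler direction and descends to `S²TM`.
When `zᵢ = 0` every `w j` is a multiple of `eᵢ`, so `sᵢ` is a multiple of `eᵢ ⊗ eᵢ`.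
-/

open Finset Matrix

variable {K ι : Type*} [Field K] [DecidableEq ι]

def rotationField (z : ι → K) (i j : ι) : ι → K :=
  z i • Pi.single j 1 - z j • Pi.single i 1

@[simp]
lemma rotationField_self (z : ι → K) (i : ι) : rotationField z i i = 0 :=
  sub_self _

variable [Fintype ι]

def rotationTensor (μ z : ι → K) (i : ι) : Matrix ι ι K :=
  ∑ j ∈ univ.erase i, (μ i - μ j)⁻¹ • vecMulVec (rotationField z i j) (rotationField z i j)

section
variable (z : ι → K) (i : ι)

lemma rotationField_dotProduct (j : ι) (v : ι → K) :
    rotationField z i j ⬝ᵥ v = z i * v j - z j * v i := by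
  simp [rotationField, sub_dotProduct]

lemma sum_smul_rotationField :
    ∑ j, z j • rotationField z i j = z i • z - (∑ j, z j ^ 2) • Pi.single i 1 := by
  ext k
  simp [rotationField, Finset.sum_apply, Pi.single_apply, mul_sub, Finset.sum_sub_distrib, sq,
    mul_comm]

lemma rotationTensor_transpose (μ : ι → K) :
    (rotationTensor μ z i)ᵀ = rotationTensor μ z i := by
  simp [rotationTensor, transpose_sum]

lemma rotationTensor_mulVec (μ v : ι → K) :
    rotationTensor μ z i *ᵥ v =
      ∑ j ∈ univ.erase i, ((μ i - μ j)⁻¹ * (rotationField z i j ⬝ᵥ v)) • rotationField z i j := by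
  simp [rotationTensor, sum_mulVec, smul_mulVec, vecMulVec_mulVec, mul_smul]

lemma rotationTensor_mulVec_conormal {μ : ι → K} (hμ : ∀ j ≠ i, μ j ≠ μ i)
    (hz : ∑ j, z j ^ 2 = 0) : rotationTensor μ z i *ᵥ (μ * z) = -(z i ^ 2) • z := by
  have hcoeff : ∀ j ∈ univ.erase i,
      (μ i - μ j)⁻¹ * (rotationField z i j ⬝ᵥ (μ * z)) = -z i * z j := by
    intro j hj
    have : μ i - μ j ≠ 0 := sub_ne_zero.2 (hμ j (ne_of_mem_erase hj)).symm
    rw [rotationField_dotProduct]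
    field_simp
    simp only [Pi.mul_apply]
    ring
  rw [rotationTensor_mulVec, sum_congr rfl fun j hj => by rw [hcoeff j hj, mul_smul],
    ← smul_sum, sum_erase _ (by simp), sum_smul_rotationField, hz]
  simp [smul_smul, sq]

lemma rotationTensor_of_eq_zero (μ : ι → K) (hz : z i = 0) :
    rotationTensor μ z i =
      (∑ j ∈ univ.erase i, z j ^ 2 / (μ i - μ j)) •
        vecMulVec (Pi.single i 1) (Pi.single i 1) := by
  simp [rotationTensor, rotationField, hz, sum_smul, smul_smul, div_eq_inv_mul, sq]

lemma rank_rotationTensor_of_eq_zero (μ : ι → K) (hz : z i = 0) :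
    (rotationTensor μ z i).rank ≤ 1 := by
  rw [rotationTensor_of_eq_zero z i μ hz, ← smul_vecMulVec]
  exact rank_vecMulVec_le _ _

end

/-- For two quadrics `Q₁ : Σ zⱼ² = 0`, `Q₂ : Σ μⱼzⱼ² = 0` in
`P^{n−1}` with the `μⱼ` distinct, the symmetric tensor
`sᵢ = Σ_{j≠i} (zᵢ∂ⱼ − zⱼ∂ᵢ)²/(μᵢ − μⱼ)`
is well defined on the smooth intersection `M = Q₁ ∩ Q₂`, and restricted to the
hyperplane section `zᵢ = 0` it degenerates to the rank-one tensor
`Σ_{j≠i} zⱼ²∂ᵢ²/(μᵢ − μⱼ)`.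

In coordinates: with `w j = zᵢ·eⱼ − zⱼ·eᵢ` (the rotation vector fields) and
`A a b = Σ_{j≠i} (w j a)(w j b)/(μᵢ − μⱼ)` the matrix of `sᵢ`, we have that `A`
is symmetric; contracting `A` with the conormal `(μₖzₖ)ₖ` of `Q₂` on `Q₁`
yields `−zᵢ² z`, a multiple of the Euler vector `z` — so `sᵢ` descends to a
section of `S²TM` on `M`; and if `zᵢ = 0` then `A = c·(eᵢ ⊗ eᵢ)` with
`c = Σ_{j≠i} zⱼ²/(μᵢ − μⱼ)`, so `A` has rank at most 1. -/
theorem quadric_intersection_symmetric_tensor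
    (n : ℕ) (μ z : Fin n → ℂ) (i : Fin n) (hμ : Function.Injective μ) :
    let w : Fin n → Fin n → ℂ := fun j k =>
      z i * (if k = j then 1 else 0) - z j * (if k = i then 1 else 0)
    let A : Matrix (Fin n) (Fin n) ℂ := Matrix.of fun a b =>
      ∑ j ∈ Finset.univ.erase i, w j a * w j b / (μ i - μ j)
    A.transpose = A ∧
    ((∑ j, z j ^ 2) = 0 →
      A.mulVec (fun k => μ k * z k) = fun k => -(z i ^ 2) * z k) ∧
    (z i = 0 →
      A = Matrix.of (fun a b => (if a = i then (1 : ℂ) else 0) *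
            (if b = i then 1 else 0) *
            ∑ j ∈ Finset.univ.erase i, z j ^ 2 / (μ i - μ j)) ∧
      A.rank ≤ 1) := by
  intro w A
  have hw : w = rotationField z i := by
    ext j k
    simp [w, rotationField, Pi.single_apply]
  have hA : A = rotationTensor μ z i := by
    ext a b
    simp [A, hw, rotationTensor, Matrix.sum_apply, vecMulVec_apply, div_eq_inv_mul]
  rw [hA]
  refine ⟨rotationTensor_transpose z i μ,
    rotationTensor_mulVec_conormal z i fun j hj h => hj (hμ h),
    fun hz => ⟨?_, rank_rotationTensor_of_eq_zero z i μ hz⟩⟩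
  rw [rotationTensor_of_eq_zero z i μ hz]
  ext a b
  simp [vecMulVec_apply, Pi.single_apply, mul_comm]
end

section
/- Let C be a genus 2 curve and K^{1/2} an even theta characteristic. If E = L ⊕ L^{-1} with deg L = 0 and L² ⊗ K^{1/2} ≅ O(x) for a point x ∈ C, then End₀E ⊗ K^{1/2} ≅ O(x) ⊕ K^{1/2} ⊕ O(σ(x)) and dim H^0(C, End₀E ⊗ K^{1/2}) = 2, where σ is the hyperelliptic involution. -/
/-- Abstract data of a smooth projective curve over ℂ: its Picard group
(line bundles under tensor product, written additively), genus, canonical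
bundle, degree and `dim H⁰` functions, with Riemann–Roch (in the form
incorporating Serre duality `h¹(L) = h⁰(K−L)`) and basic vanishing. -/
structure CurveData where
  Pic : Type
  [instPic : AddCommGroup Pic]
  genus : ℕ
  K : Pic
  deg : Pic → ℤ
  h0 : Pic → ℕ
  deg_add : ∀ a b : Pic, deg (a + b) = deg a + deg b
  deg_K : deg K = 2 * (genus : ℤ) - 2
  h0_zero : h0 0 = 1
  h0_neg : ∀ L, deg L < 0 → h0 L = 0
  riemannRoch : ∀ L, (h0 L : ℤ) - (h0 (K - L) : ℤ) = deg L + 1 - (genus : ℤ)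

attribute [instance] CurveData.instPic

/- A line bundle of degree 1 on a genus 2 curve sits at degree g − 1, where Riemann–Roch says that
it and its Serre dual have the same number of sections; so h⁰(O(σ(x))) = h⁰(K − O(x)) = 1, and
with h⁰(K^{1/2}) = 0 the three summands of End₀E ⊗ K^{1/2} contribute 1 + 0 + 1. -/

namespace CurveData

theorem h0_K_sub_eq_of_deg_eq (D : CurveData) {L : D.Pic} (hL : D.deg L = D.genus - 1) :
    D.h0 (D.K - L) = D.h0 L := by
  have := D.riemannRoch L
  omega

end CurveData

theorem genus2_semistable_even_theta_h0_general (D : CurveData) (hg : D.genus = 2)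
    (θ : D.Pic) (hθ : θ + θ = D.K)
    (hθeven : Even (D.h0 θ)) (hθle : D.h0 θ ≤ 1)
    (L P : D.Pic)
    (hP : L + L + θ = P) (hPdeg : D.deg P = 1) (hPh0 : D.h0 P = 1) :
    (-(L + L) + θ = D.K - P) ∧
    D.h0 (D.K - P) = 1 ∧
    D.h0 (L + L + θ) + D.h0 θ + D.h0 (-(L + L) + θ) = 2 := by
  have hσ : -(L + L) + θ = D.K - P := by rw [← hP, ← hθ]; abel
  have hθ0 : D.h0 θ = 0 := by
    obtain ⟨k, hk⟩ := hθeven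
    omega
  have hKP : D.h0 (D.K - P) = 1 := by
    rw [D.h0_K_sub_eq_of_deg_eq (by rw [hPdeg, hg]; norm_num), hPh0]
  exact ⟨hσ, hKP, by rw [hP, hσ, hθ0, hPh0, hKP]⟩

/-- Let `C` be a genus-2 curve, `θ = K^{1/2}` an even theta
characteristic (so `h⁰(θ) = 0`; here `Even (h⁰ θ)` together with `h⁰ θ ≤ 1`, as
`θ` has degree 1 on the hyperelliptic `C`).  If `E = L ⊕ L⁻¹` with `deg L = 0`
and `L² ⊗ K^{1/2} ≅ O(x)` for a point `x ∈ C` (with class `P = O(x)`,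
`deg P = 1`, `h⁰(P) = 1`), then
`End₀E ⊗ K^{1/2} ≅ O(x) ⊕ K^{1/2} ⊕ O(σ(x))` — in the Picard group
`L² + θ = P`, the middle summand is `θ`, and `−L² + θ = K − P = O(σ(x))` —
and `dim H⁰(C, End₀E ⊗ K^{1/2}) = h⁰(P) + h⁰(θ) + h⁰(K−P) = 2`. -/
theorem genus2_semistable_even_theta_h0 (D : CurveData) (hg : D.genus = 2)
    (θ : D.Pic) (hθ : θ + θ = D.K)
    (hθeven : Even (D.h0 θ)) (hθle : D.h0 θ ≤ 1) (hθdeg : D.deg θ = 1)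
    (L P : D.Pic) (hL : D.deg L = 0)
    (hP : L + L + θ = P) (hPdeg : D.deg P = 1) (hPh0 : D.h0 P = 1) :
    (-(L + L) + θ = D.K - P) ∧
    D.h0 (D.K - P) = 1 ∧
    D.h0 (L + L + θ) + D.h0 θ + D.h0 (-(L + L) + θ) = 2 :=
  genus2_semistable_even_theta_h0_general D hg θ hθ hθeven hθle L P hP hPdeg hPh0
end
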